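/- For every finite string W over {A, X, B}, one has |W| = |[XW]| − |[AXW]|, where |W| is the open value and |[·]| denotes the locked value in the tight puzzle. -/

import Mathlib

/-!
The "tight puzzle" of Schwartz–Tabachnikov.  Strings over the alphabet `{A, X, B}`;
word list (coefficient, weight): `X (1,0)`, `XA (1,1)`, `XAA (1,1)`, `AXA (2,1)`,
`AAA (-1,1)`, `BA (-1,1)`, `ABA (-1,1)`, `XXA (-1,1)`; in a parsing the word `X` may
never be immediately followed by the word `XA` or the word `BA`.
-/

open scoped Classical

/-- The three-letter alphabet. -/
inductive PLetter | A | X | B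
deriving DecidableEq

/-- Strings over the alphabet. -/
abbrev PWord := List PLetter

/-- The tight puzzle word list. -/
def tightWords : List PWord :=
  [[PLetter.X], [PLetter.X, PLetter.A], [PLetter.X, PLetter.A, PLetter.A],
   [PLetter.A, PLetter.X, PLetter.A], [PLetter.A, PLetter.A, PLetter.A],
   [PLetter.B, PLetter.A], [PLetter.A, PLetter.B, PLetter.A],
   [PLetter.X, PLetter.X, PLetter.A]]

/-- Coefficients of the words of the tight puzzle (`AXA ↦ 2`; `AAA, BA, ABA, XXA ↦ -1`;
`X, XA, XAA ↦ 1`). -/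
def tightCoeff (w : PWord) : ℤ :=
  if w = [PLetter.A, PLetter.X, PLetter.A] then 2
  else if w = [PLetter.A, PLetter.A, PLetter.A] ∨ w = [PLetter.B, PLetter.A] ∨
      w = [PLetter.A, PLetter.B, PLetter.A] ∨ w = [PLetter.X, PLetter.X, PLetter.A] then -1
  else 1

/-- Weights of the words: the word `X` has weight `0`, all other words weight `1`. -/
def wordWt (w : PWord) : ℕ := if w = [PLetter.X] then 0 else 1

/-- The forbidden adjacency: the word `X` immediately followed by `XA` or `BA`. -/
def Bad (u v : PWord) : Prop :=
  u = [PLetter.X] ∧ (v = [PLetter.X, PLetter.A] ∨ v = [PLetter.B, PLetter.A])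

/-- The contribution `coefficient · t^weight ∈ ℤ[t]` of a parsing `L`. -/
noncomputable def parseVal (c : PWord → ℤ) (L : List PWord) : Polynomial ℤ :=
  Polynomial.C ((L.map c).prod) * Polynomial.X ^ ((L.map wordWt).sum)

/-- `L` is a parsing in the tight puzzle: all its words are on the word list and the
forbidden adjacency never occurs. -/
def TightChain (L : List PWord) : Prop :=
  (∀ w ∈ L, w ∈ tightWords) ∧ List.Chain' (fun u v => ¬ Bad u v) L

/-- The *core* of a string: what remains after deleting all leading and trailing `X`s. -/
def core (s : PWord) : PWord :=
  ((s.dropWhile (· == PLetter.X)).reverse.dropWhile (· == PLetter.X)).reverse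

/-- `L` is a parsing of the bi-infinite string `⋯XX·W·XX⋯` (with the infinitely many
padding `X`s parsed as copies of the word `X` and trimmed away): the words of `L`
concatenate to `W` up to padding by `X`s on either side, `L` neither starts nor ends
with the word `X`, and (because of the padding `X`-words on the left) the first word
of `L` is not `XA` or `BA`. -/
def IsOpenParsing (W : PWord) (L : List PWord) : Prop :=
  TightChain L ∧ core L.flatten = core W ∧
  ∀ h : L ≠ [],
    L.head h ≠ [PLetter.X] ∧ L.head h ≠ [PLetter.X, PLetter.A] ∧
    L.head h ≠ [PLetter.B, PLetter.A] ∧ L.getLast h ≠ [PLetter.X]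

/-- `(r, L)` is a parsing of the cyclic string `(W)`: reading the necklace of the
letters of `W` starting at position `r`, the words of `L` concatenate to it, the
forbidden adjacency does not occur (cyclically), and `r < (last word).length`
(so that every parsing of the necklace is counted exactly once). -/
def IsCyclicParsing (W : PWord) (r : ℕ) (L : List PWord) : Prop :=
  TightChain L ∧
  ∃ h : L ≠ [], L.flatten = W.rotate r ∧ r < (L.getLast h).length ∧
    ¬ Bad (L.getLast h) (L.head h)

/-- `L` is a parsing of the locked string `[W]`: the words of `L` concatenate exactly
to `W`, no padding allowed. -/
def IsLockedParsing (W : PWord) (L : List PWord) : Prop :=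
  TightChain L ∧ L.flatten = W

/-- The nine words of both puzzles, as a function (used to enumerate parsings). -/
def wordOf : Fin 9 → PWord :=
  ![[PLetter.X], [PLetter.X, PLetter.A], [PLetter.X, PLetter.A, PLetter.A],
    [PLetter.X, PLetter.B, PLetter.A], [PLetter.A, PLetter.X, PLetter.A],
    [PLetter.A, PLetter.A, PLetter.A], [PLetter.B, PLetter.A],
    [PLetter.A, PLetter.B, PLetter.A], [PLetter.X, PLetter.X, PLetter.A]]

/-- The open value `|W| ∈ ℤ[t]`: the sum of `coefficient · t^weight` over all parsings
of the bi-infinite string `⋯XX·W·XX⋯` (any such parsing consists of at most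
`W.length + 2` words). -/
noncomputable def openVal (W : PWord) : Polynomial ℤ :=
  ∑ k ∈ Finset.range (W.length + 3), ∑ f : Fin k → Fin 9,
    if IsOpenParsing W ((List.ofFn f).map wordOf) then
      parseVal tightCoeff ((List.ofFn f).map wordOf)
    else 0

/-- The cyclic value `|(W)| ∈ ℤ[t]`: the sum of `coefficient · t^weight` over all
parsings of the cyclic string `(W)`. -/
noncomputable def cycVal (W : PWord) : Polynomial ℤ :=
  ∑ r ∈ Finset.range W.length, ∑ k ∈ Finset.range (W.length + 1), ∑ f : Fin k → Fin 9,
    if IsCyclicParsing W r ((List.ofFn f).map wordOf) then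
      parseVal tightCoeff ((List.ofFn f).map wordOf)
    else 0

/-- The locked value `|[W]| ∈ ℤ[t]`: the sum of `coefficient · t^weight` over all
parsings whose concatenation is exactly `W`. -/
noncomputable def lockVal (W : PWord) : Polynomial ℤ :=
  ∑ k ∈ Finset.range (W.length + 1), ∑ f : Fin k → Fin 9,
    if IsLockedParsing W ((List.ofFn f).map wordOf) then
      parseVal tightCoeff ((List.ofFn f).map wordOf)
    else 0


/-!
Expanding a locked parsing along its first word gives a recursion for `|[W]|` in the locked
values of suffixes of `W`; the only subtlety is the word `X`, which may be followed by any
parsing except those beginning with `XA` or `BA`. An open parsing of `W`, after its first word,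
is a locked parsing of the rest of the core of `W` (`W` stripped of its leading and trailing `X`s),
so `|W|` is a short linear combination of locked values of suffixes of the core. By the recursion,
`|[XW]| - |[AXW]|` does not change when an `X` is added at either end of `W`, and for a `W`
that begins with `A` or `B` (or is empty) it equals that combination.
-/

namespace TightPuzzle

open PLetter

local notation "t" => (Polynomial.X : Polynomial ℤ)

section EnumSum

variable {α M : Type*} {n : ℕ} (g : Fin n → α)

def enumSum [AddCommMonoid M] (N : ℕ) (F : List α → M) : M :=
  ∑ k ∈ Finset.range N, ∑ f : Fin k → Fin n, F ((List.ofFn f).map g)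

theorem enumSum_succ [AddCommMonoid M] (N : ℕ) (F : List α → M) :
    enumSum g (N + 1) F = F [] + ∑ i, enumSum g N (fun L => F (g i :: L)) := by
  have sum_cons (k : ℕ) : ∑ f : Fin (k + 1) → Fin n, F ((List.ofFn f).map g) =
      ∑ i, ∑ f : Fin k → Fin n, F (g i :: (List.ofFn f).map g) := by
    rw [← (Fin.consEquiv fun _ => Fin n).sum_comp, Fintype.sum_prod_type]
    simp [Fin.consEquiv, List.ofFn_succ]
  simp only [enumSum, Finset.sum_range_succ', sum_cons, Fintype.sum_unique, List.ofFn_zero,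
    List.map_nil, add_comm (F []), Finset.sum_comm (γ := Fin n)]

theorem enumSum_eq_of_le [AddCommMonoid M] {m N : ℕ} {F : List α → M}
    (hF : ∀ L, m ≤ L.length → F L = 0) (h : m ≤ N) : enumSum g N F = enumSum g m F := by
  induction N, h using Nat.le_induction with
  | base => rfl
  | succ N hmN ih =>
    rw [enumSum, Finset.sum_range_succ, ← enumSum, ih,
      Finset.sum_eq_zero fun f _ => hF _ (by simpa using hmN), add_zero]

@[simp]
theorem enumSum_zero [AddCommMonoid M] (N : ℕ) : enumSum g N (fun _ => (0 : M)) = 0 := by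
  simp [enumSum]

theorem enumSum_add [AddCommMonoid M] (N : ℕ) (F G : List α → M) :
    enumSum g N (F + G) = enumSum g N F + enumSum g N G := by
  simp only [enumSum, Pi.add_apply, Finset.sum_add_distrib]

theorem enumSum_mul_left [NonUnitalNonAssocSemiring M] (N : ℕ) (c : M) (F : List α → M) :
    enumSum g N (fun L => c * F L) = c * enumSum g N F := by
  simp only [enumSum, Finset.mul_sum]

end EnumSum

theorem sum_wordOf {M : Type*} [AddCommMonoid M] (G : PWord → M) :
    ∑ i, G (wordOf i) = G [X] + G [X, A] + G [X, A, A] + G [X, B, A] + G [A, X, A] +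
      G [A, A, A] + G [B, A] + G [A, B, A] + G [X, X, A] := by
  simp [Fin.sum_univ_succ, wordOf, add_assoc]

theorem ne_nil_of_mem_tightWords : ∀ w ∈ tightWords, w ≠ [] := by decide

theorem length_le_of_isLockedParsing {V : PWord} {L : List PWord} (h : IsLockedParsing V L) :
    L.length ≤ V.length := by
  obtain ⟨⟨hmem, -⟩, rfl⟩ := h
  induction L with
  | nil => simp
  | cons w L ih =>
    have hw := List.length_pos_iff.2 (ne_nil_of_mem_tightWords w (hmem w (by simp)))
    have := ih fun u hu => hmem u (by simp [hu])
    simp only [List.length_cons, List.flatten_cons, List.length_append]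
    omega

theorem parseVal_cons (c : PWord → ℤ) (w : PWord) (L : List PWord) :
    parseVal c (w :: L) = Polynomial.C (c w) * t ^ wordWt w * parseVal c L := by
  simp only [parseVal, List.map_cons, List.prod_cons, List.sum_cons, map_mul, pow_add]
  ring

theorem tightChain_cons {w : PWord} {L : List PWord} :
    TightChain (w :: L) ↔ (w ∈ tightWords ∧ ∀ v ∈ L.head?, ¬ Bad w v) ∧ TightChain L :=
  (and_congr List.forall_mem_cons List.isChain_cons).trans and_and_and_comm

theorem isLockedParsing_cons {V w : PWord} {L : List PWord} :
    IsLockedParsing V (w :: L) ↔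
      (w ∈ tightWords ∧ w <+: V) ∧ (∀ v ∈ L.head?, ¬ Bad w v) ∧
        IsLockedParsing (V.drop w.length) L := by
  have flatten_iff : w ++ L.flatten = V ↔ w <+: V ∧ L.flatten = V.drop w.length := by
    constructor
    · rintro rfl
      exact ⟨List.prefix_append _ _, (List.drop_left ..).symm⟩
    · rintro ⟨hw, hL⟩
      rw [hL]
      exact List.prefix_iff_eq_append.1 hw
  simp only [IsLockedParsing, tightChain_cons, List.flatten_cons, flatten_iff]
  tauto

noncomputable def lockedTerm (V : PWord) (L : List PWord) : Polynomial ℤ :=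
  if IsLockedParsing V L then parseVal tightCoeff L else 0

noncomputable def lockedTermAfter (u V : PWord) (L : List PWord) : Polynomial ℤ :=
  if ∀ v ∈ L.head?, ¬ Bad u v then lockedTerm V L else 0

noncomputable def lockValAfter (u V : PWord) : Polynomial ℤ :=
  enumSum wordOf (V.length + 1) (lockedTermAfter u V)

noncomputable def prefixVal (w V : PWord) : Polynomial ℤ :=
  if w <+: V then lockVal (V.drop w.length) else 0

theorem lockVal_eq_enumSum (V : PWord) :
    lockVal V = enumSum wordOf (V.length + 1) (lockedTerm V) := rfl

theorem lockedTerm_eq_zero {V : PWord} {L : List PWord} (h : V.length < L.length) :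
    lockedTerm V L = 0 :=
  if_neg fun hL => (length_le_of_isLockedParsing hL).not_gt h

theorem enumSum_lockedTerm {V : PWord} {N : ℕ} (h : V.length < N) :
    enumSum wordOf N (lockedTerm V) = lockVal V :=
  enumSum_eq_of_le wordOf (fun _ hL => lockedTerm_eq_zero hL) h

theorem enumSum_lockedTermAfter (u : PWord) {V : PWord} {N : ℕ} (h : V.length < N) :
    enumSum wordOf N (lockedTermAfter u V) = lockValAfter u V :=
  enumSum_eq_of_le wordOf (fun _ hL => by simp [lockedTermAfter, lockedTerm_eq_zero hL]) h

theorem lockValAfter_of_ne {u : PWord} (hu : u ≠ [X]) (V : PWord) :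
    lockValAfter u V = lockVal V := by
  have hterm : lockedTermAfter u V = lockedTerm V := by
    ext1 L
    exact if_pos fun v _ hb => hu hb.1
  rw [lockValAfter, hterm, lockVal_eq_enumSum]

theorem lockedTerm_cons (V w : PWord) (L : List PWord) :
    lockedTerm V (w :: L) = if w ∈ tightWords ∧ w <+: V then
      Polynomial.C (tightCoeff w) * t ^ wordWt w * lockedTermAfter w (V.drop w.length) L
    else 0 := by
  simp only [lockedTerm, lockedTermAfter, isLockedParsing_cons, parseVal_cons]
  split_ifs <;> simp_all

theorem enumSum_lockedTerm_cons {V : PWord} {N : ℕ} (h : V.length ≤ N) (w : PWord) :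
    enumSum wordOf N (fun L => lockedTerm V (w :: L)) = if w ∈ tightWords ∧ w <+: V then
      Polynomial.C (tightCoeff w) * t ^ wordWt w * lockValAfter w (V.drop w.length)
    else 0 := by
  simp only [lockedTerm_cons]
  split_ifs with hw
  · have hlt : (V.drop w.length).length < N := by
      have := List.length_pos_iff.2 (ne_nil_of_mem_tightWords w hw.1)
      have := hw.2.length_le
      simp only [List.length_drop]
      omega
    rw [enumSum_mul_left, enumSum_lockedTermAfter w hlt]
  · simp

theorem lockedTerm_nil (V : PWord) : lockedTerm V [] = if V = [] then 1 else 0 := by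
  have : IsLockedParsing V [] ↔ V = [] :=
    ⟨fun h => h.2.symm, fun h => ⟨⟨by simp, List.isChain_nil⟩, h.symm⟩⟩
  simp [lockedTerm, this, parseVal]

theorem enumSum_lockedTerm_cons_of_ne {V : PWord} {N : ℕ} (h : V.length ≤ N) {w : PWord}
    (hw : w ∈ tightWords) (hX : w ≠ [X]) :
    enumSum wordOf N (fun L => lockedTerm V (w :: L)) =
      Polynomial.C (tightCoeff w) * t * prefixVal w V := by
  rw [enumSum_lockedTerm_cons h, prefixVal, lockValAfter_of_ne hX, wordWt, if_neg hX, pow_one]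
  simp [hw, mul_ite]

theorem enumSum_lockedTerm_cons_of_not_mem {V : PWord} {N : ℕ} (h : V.length ≤ N) {w : PWord}
    (hw : w ∉ tightWords) : enumSum wordOf N (fun L => lockedTerm V (w :: L)) = 0 := by
  simp [enumSum_lockedTerm_cons h, hw]

theorem lockVal_eq_firstWord (W : PWord) :
    lockVal W = (if W = [] then 1 else 0)
      + (if [X] <+: W then lockValAfter [X] (W.drop 1) else 0)
      + t * prefixVal [X, A] W + t * prefixVal [X, A, A] W + 2 * t * prefixVal [A, X, A] W
      - t * prefixVal [A, A, A] W - t * prefixVal [B, A] W - t * prefixVal [A, B, A] W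
      - t * prefixVal [X, X, A] W := by
  rw [← enumSum_lockedTerm (Nat.lt_succ_self _), enumSum_succ,
    sum_wordOf fun w => enumSum wordOf _ fun L => lockedTerm W (w :: L),
    enumSum_lockedTerm_cons le_rfl [X]]
  simp (disch := first | decide | rfl) only [enumSum_lockedTerm_cons_of_ne,
    enumSum_lockedTerm_cons_of_not_mem]
  simp [lockedTerm_nil, tightWords, tightCoeff, wordWt]
  ring

theorem lockValAfter_X (V : PWord) :
    lockValAfter [X] V = lockVal V - t * prefixVal [X, A] V + t * prefixVal [B, A] V := by
  let badHead (L : List PWord) : Polynomial ℤ :=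
    if ∀ v ∈ L.head?, ¬ Bad [X] v then 0 else lockedTerm V L
  have split_head : lockedTerm V = lockedTermAfter [X] V + badHead := by
    ext1 L
    simp only [Pi.add_apply, lockedTermAfter, badHead]
    split_ifs <;> simp
  have sum_badHead : enumSum wordOf (V.length + 1) badHead =
      t * prefixVal [X, A] V - t * prefixVal [B, A] V := by
    rw [enumSum_succ, sum_wordOf fun w => enumSum wordOf _ fun L => badHead (w :: L)]
    simp (disch := first | decide | rfl) [badHead, Bad, enumSum_lockedTerm_cons_of_ne,
      tightCoeff]
    ring
  rw [lockValAfter, lockVal_eq_enumSum, split_head, enumSum_add, sum_badHead]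
  ring

@[simp]
theorem prefixVal_cons_nil (a : PLetter) (w : PWord) : prefixVal (a :: w) [] = 0 := by
  simp [prefixVal]

@[simp]
theorem prefixVal_cons_cons (a b : PLetter) (w V : PWord) :
    prefixVal (a :: w) (b :: V) = if a = b then prefixVal w V else 0 := by
  by_cases hab : a = b <;> simp [prefixVal, hab]

theorem lockVal_nil : lockVal [] = 1 := by
  simp [lockVal_eq_firstWord []]

theorem lockVal_cons_X (V : PWord) :
    lockVal (X :: V) = lockVal V - 2 * t * prefixVal [X, A] V + t * prefixVal [B, A] V
      + t * prefixVal [A] V + t * prefixVal [A, A] V := by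
  rw [lockVal_eq_firstWord]
  simp [lockValAfter_X]
  ring

theorem lockVal_cons_A (V : PWord) :
    lockVal (A :: V) = 2 * t * prefixVal [X, A] V - t * prefixVal [A, A] V
      - t * prefixVal [B, A] V := by
  rw [lockVal_eq_firstWord]
  simp

theorem lockVal_cons_B (V : PWord) : lockVal (B :: V) = -(t * prefixVal [A] V) := by
  rw [lockVal_eq_firstWord]
  simp

theorem prefixVal_append_X {w : PWord} (hw : w.getLast? ≠ some X) {V : PWord}
    (h : lockVal (V.drop w.length ++ [X]) = lockVal (V.drop w.length)) :
    prefixVal w (V ++ [X]) = prefixVal w V := by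
  have hpre : w <+: V ++ [X] ↔ w <+: V := by
    rw [List.prefix_concat_iff, or_iff_right]
    rintro rfl
    simp at hw
  by_cases hwV : w <+: V
  · rw [prefixVal, prefixVal, if_pos (hpre.2 hwV), if_pos hwV,
      List.drop_append_of_le_length hwV.length_le, h]
  · rw [prefixVal, prefixVal, if_neg (mt hpre.1 hwV), if_neg hwV]

theorem lockVal_append_X : ∀ V : PWord, lockVal (V ++ [X]) = lockVal V
  | [] => by simp [lockVal_cons_X, lockVal_nil]
  | c :: V => by
    have ih (k : ℕ) : lockVal (V.drop k ++ [X]) = lockVal (V.drop k) :=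
      lockVal_append_X (V.drop k)
    have hV : lockVal (V ++ [X]) = lockVal V := ih 0
    have hA := prefixVal_append_X (w := [A]) (by simp) (ih 1)
    have hAA := prefixVal_append_X (w := [A, A]) (by simp) (ih 2)
    have hXA := prefixVal_append_X (w := [X, A]) (by simp) (ih 2)
    have hBA := prefixVal_append_X (w := [B, A]) (by simp) (ih 2)
    cases c <;> simp only [List.cons_append, lockVal_cons_X, lockVal_cons_A, lockVal_cons_B,
      hA, hAA, hXA, hBA, hV]
termination_by V => V.length
decreasing_by all_goals simp

noncomputable def lockDiff (W : PWord) : Polynomial ℤ :=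
  lockVal ([X] ++ W) - lockVal ([A, X] ++ W)

theorem lockDiff_eq (W : PWord) :
    lockDiff W = lockVal W - 2 * t * prefixVal [X, A] W + t * prefixVal [B, A] W
      - t * prefixVal [A] W + t * prefixVal [A, A] W := by
  simp [lockDiff, lockVal_cons_X, lockVal_cons_A]
  ring

theorem lockDiff_cons_X (V : PWord) : lockDiff (X :: V) = lockDiff V := by
  simp [lockDiff_eq, lockVal_cons_X]
  ring

theorem lockDiff_append_X (V : PWord) : lockDiff (V ++ [X]) = lockDiff V := by
  simp only [lockDiff, ← List.append_assoc, lockVal_append_X]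

theorem lockDiff_replicate_append (a b : ℕ) (V : PWord) :
    lockDiff (List.replicate a X ++ V ++ List.replicate b X) = lockDiff V := by
  induction a with
  | succ a ih => rwa [List.replicate_succ, List.cons_append, List.cons_append, lockDiff_cons_X]
  | zero =>
    induction b with
    | zero => simp
    | succ b ih =>
      rwa [List.replicate_succ', ← List.append_assoc, lockDiff_append_X]

theorem core_eq_rdropWhile (s : PWord) :
    core s = (s.dropWhile (· == X)).rdropWhile (· == X) := rfl

theorem dropWhile_replicate_append {u : PWord} (hu : u.head? ≠ some X) (a : ℕ) :
    (List.replicate a X ++ u).dropWhile (· == X) = u := by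
  induction a with
  | zero => cases u <;> simp_all
  | succ a ih => simpa [List.replicate_succ] using ih

theorem core_replicate_append {u : PWord} (hh : u.head? ≠ some X) (hl : u.getLast? ≠ some X)
    (a : ℕ) : core (List.replicate a X ++ u) = u := by
  rw [core_eq_rdropWhile, dropWhile_replicate_append hh, List.rdropWhile_eq_self_iff]
  intro hu
  simpa [List.getLast?_eq_some_getLast hu] using hl

theorem head?_core_ne (s : PWord) : (core s).head? ≠ some X := by
  obtain ⟨r, hr⟩ : core s <+: s.dropWhile (· == X) := List.rdropWhile_prefix _ _
  have := List.head?_dropWhile_not (· == X) s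
  intro h
  rw [← hr, List.head?_append, h] at this
  simp at this

theorem getLast?_core_ne (s : PWord) : (core s).getLast? ≠ some X := by
  intro h
  have hne : core s ≠ [] := by rintro h'; simp [h'] at h
  have := List.rdropWhile_last_not (· == X) (s.dropWhile (· == X)) hne
  rw [List.getLast?_eq_some_getLast hne] at h
  simp_all [core_eq_rdropWhile]

theorem takeWhile_eq_replicate (s : PWord) :
    s.takeWhile (· == X) = List.replicate (s.takeWhile (· == X)).length X :=
  List.eq_replicate_iff.2 ⟨rfl, fun _ hb => by simpa using List.mem_takeWhile_imp hb⟩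

theorem rtakeWhile_eq_replicate (s : PWord) :
    s.rtakeWhile (· == X) = List.replicate (s.rtakeWhile (· == X)).length X :=
  List.eq_replicate_iff.2 ⟨rfl, fun _ hb => by simpa using List.mem_rtakeWhile_imp hb⟩

theorem exists_eq_replicate_append_core (s : PWord) :
    ∃ a b, s = List.replicate a X ++ core s ++ List.replicate b X := by
  refine ⟨(s.takeWhile (· == X)).length,
    ((s.dropWhile (· == X)).rtakeWhile (· == X)).length, ?_⟩
  rw [List.append_assoc, ← takeWhile_eq_replicate, ← rtakeWhile_eq_replicate,
    core_eq_rdropWhile, List.rdropWhile_append_rtakeWhile, List.takeWhile_append_dropWhile]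

theorem getLast?_flatten_of_ne_nil {L : List PWord} (hL : ∀ v ∈ L, v ≠ []) :
    L.flatten.getLast? = L.getLast?.bind List.getLast? := by
  induction L with
  | nil => rfl
  | cons w L ih =>
    rw [List.flatten_cons, List.getLast?_append, ih fun v hv => hL v (by simp [hv])]
    cases hlast : L.getLast? with
    | none => simp_all
    | some v =>
      have hv : v ≠ [] := hL v (by simp [List.mem_of_getLast? hlast])
      obtain ⟨a, ha⟩ := Option.ne_none_iff_exists'.1 (mt List.getLast?_eq_none_iff.1 hv)
      simp [List.getLast?_cons, hlast, ha]

theorem getLast_eq_X_iff {K : List PWord} (hK : ∀ v ∈ K, v ∈ tightWords) (h : K ≠ []) :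
    K.getLast h = [X] ↔ K.flatten.getLast? = some X := by
  have tight_getLast : ∀ v ∈ tightWords, v.getLast? = some X ↔ v = [X] := by decide
  rw [getLast?_flatten_of_ne_nil fun v hv => ne_nil_of_mem_tightWords v (hK v hv),
    List.getLast?_eq_some_getLast h, Option.bind_some,
    tight_getLast _ (hK _ (List.getLast_mem h))]

theorem isOpenParsing_nil (W : PWord) : IsOpenParsing W [] ↔ core W = [] :=
  ⟨fun h => h.2.1.symm,
    fun h => ⟨⟨by simp, List.isChain_nil⟩, h ▸ rfl, fun h => absurd rfl h⟩⟩

/-- The leading `X`s of the first word are absorbed by the padding. -/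
theorem isOpenParsing_cons_iff {W w : PWord} {L : List PWord} (hw : w ∈ tightWords)
    (hXA : w ≠ [X, A]) (hBA : w ≠ [B, A]) (hr₁ : (w.dropWhile (· == X)).head? = some A)
    (hr₂ : (w.dropWhile (· == X)).getLast? = some A) :
    IsOpenParsing W (w :: L) ↔ w.dropWhile (· == X) <+: core W ∧
      IsLockedParsing ((core W).drop (w.dropWhile (· == X)).length) L := by
  set r := w.dropWhile (· == X)
  obtain ⟨j, hw_eq⟩ : ∃ j, w = List.replicate j X ++ r :=
    ⟨_, by rw [← takeWhile_eq_replicate, List.takeWhile_append_dropWhile]⟩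
  have hX : w ≠ [X] := by rintro rfl; simp [r] at hr₁
  have ends_X_iff (F : PWord) : (w ++ F).getLast? = some X ↔ F.getLast? = some X := by
    rw [hw_eq, List.getLast?_append, List.getLast?_append, hr₂]
    cases F.getLast? <;> simp
  have core_eq {F : PWord} (hF : F.getLast? ≠ some X) : core (w ++ F) = r ++ F := by
    rw [hw_eq, List.append_assoc, core_replicate_append]
    · simp [List.head?_append, hr₁]
    · cases hFl : F.getLast? with
      | none => simp [List.getLast?_append, hFl, hr₂]
      | some a => simpa [List.getLast?_append, hFl] using hF
  have last_iff (h : w :: L ≠ []) (hL : ∀ v ∈ L, v ∈ tightWords) :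
      (w :: L).getLast h = [X] ↔ L.flatten.getLast? = some X := by
    rw [getLast_eq_X_iff (List.forall_mem_cons.2 ⟨hw, hL⟩), List.flatten_cons, ends_X_iff]
  constructor
  · rintro ⟨hchain, hcore, hhead⟩
    obtain ⟨-, hL⟩ := tightChain_cons.1 hchain
    have hF : L.flatten.getLast? ≠ some X :=
      fun hF => (hhead (by simp)).2.2.2 ((last_iff _ hL.1).2 hF)
    rw [List.flatten_cons, core_eq hF] at hcore
    rw [← hcore, List.drop_left]
    exact ⟨List.prefix_append _ _, hL, rfl⟩
  · rintro ⟨hpre, hL, hflat⟩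
    have hcoreW : core W = r ++ L.flatten := by
      rw [hflat]
      exact (List.prefix_iff_eq_append.1 hpre).symm
    have hF : L.flatten.getLast? ≠ some X := fun hF =>
      getLast?_core_ne W (by rw [hcoreW, List.getLast?_append, hF]; rfl)
    refine ⟨tightChain_cons.2 ⟨⟨hw, fun v _ hb => hX hb.1⟩, hL⟩, ?_, fun h => ?_⟩
    · rw [List.flatten_cons, core_eq hF, hcoreW]
    · exact ⟨hX, hXA, hBA, fun hlast => hF ((last_iff h hL.1).1 hlast)⟩

noncomputable def openTerm (W : PWord) (L : List PWord) : Polynomial ℤ :=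
  if IsOpenParsing W L then parseVal tightCoeff L else 0

theorem openVal_eq_enumSum (W : PWord) :
    openVal W = enumSum wordOf (W.length + 3) (openTerm W) := rfl

theorem length_core_le (s : PWord) : (core s).length ≤ s.length := by
  obtain ⟨a, b, hs⟩ := exists_eq_replicate_append_core s
  conv_rhs => rw [hs]
  simp only [List.length_append, List.length_replicate]
  omega

theorem enumSum_openTerm_cons {W : PWord} {N : ℕ} (hN : (core W).length < N) {w : PWord}
    (hw : w ∈ tightWords) (hXA : w ≠ [X, A]) (hBA : w ≠ [B, A])
    (hr₁ : (w.dropWhile (· == X)).head? = some A)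
    (hr₂ : (w.dropWhile (· == X)).getLast? = some A) :
    enumSum wordOf N (fun L => openTerm W (w :: L)) =
      Polynomial.C (tightCoeff w) * t * prefixVal (w.dropWhile (· == X)) (core W) := by
  have hX : w ≠ [X] := by rintro rfl; simp at hr₁
  have hterm (L : List PWord) : openTerm W (w :: L) =
      if w.dropWhile (· == X) <+: core W then Polynomial.C (tightCoeff w) * t *
        lockedTerm ((core W).drop (w.dropWhile (· == X)).length) L else 0 := by
    simp only [openTerm, lockedTerm, isOpenParsing_cons_iff hw hXA hBA hr₁ hr₂, parseVal_cons,
      wordWt, if_neg hX, pow_one]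
    split_ifs <;> simp_all
  simp only [hterm, prefixVal]
  split_ifs
  · rw [enumSum_mul_left, enumSum_lockedTerm (by simp; omega)]
  · simp

theorem enumSum_openTerm_cons_eq_zero {W w : PWord}
    (hw : w ∉ tightWords ∨ w = [X] ∨ w = [X, A] ∨ w = [B, A]) (N : ℕ) :
    enumSum wordOf N (fun L => openTerm W (w :: L)) = 0 := by
  have hnot (L : List PWord) : ¬ IsOpenParsing W (w :: L) := by
    rintro ⟨hchain, -, hhead⟩
    obtain ⟨hX, hXA, hBA, -⟩ := hhead (List.cons_ne_nil _ _)
    rcases hw with hw | rfl | rfl | rfl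
    · exact hw (tightChain_cons.1 hchain).1.1
    all_goals simp_all
  simp [openTerm, hnot]

theorem openVal_eq_firstWord (W : PWord) :
    openVal W = (if core W = [] then 1 else 0) + t * prefixVal [A, A] (core W)
      + 2 * t * prefixVal [A, X, A] (core W) - t * prefixVal [A, A, A] (core W)
      - t * prefixVal [A, B, A] (core W) - t * prefixVal [A] (core W) := by
  have hN : (core W).length < W.length + 2 := by have := length_core_le W; omega
  rw [openVal_eq_enumSum, enumSum_succ,
    sum_wordOf fun w => enumSum wordOf _ fun L => openTerm W (w :: L)]
  simp (disch := first | decide | exact hN) only [enumSum_openTerm_cons,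
    enumSum_openTerm_cons_eq_zero]
  simp [openTerm, isOpenParsing_nil, parseVal, tightCoeff]
  ring

theorem openVal_eq_lockDiff_core (W : PWord) : openVal W = lockDiff (core W) := by
  rw [openVal_eq_firstWord, lockDiff_eq]
  have hhead := head?_core_ne W
  generalize core W = C at hhead ⊢
  rcases C with _ | ⟨_ | _ | _, V⟩
  · simp [lockVal_nil]
  · simp [lockVal_cons_A]
    ring
  · simp at hhead
  · simp [lockVal_cons_B]

end TightPuzzle

open PLetter in
/-- For every finite string `W`, `|W| = |[XW]| - |[AXW]|` (open vs. locked values in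
the tight puzzle). -/
theorem open_eq_locked_diff (W : PWord) :
    openVal W = lockVal ([X] ++ W) - lockVal ([A, X] ++ W) := by
  obtain ⟨a, b, hW⟩ := TightPuzzle.exists_eq_replicate_append_core W
  rw [TightPuzzle.openVal_eq_lockDiff_core,
    ← TightPuzzle.lockDiff_replicate_append a b (core W), ← hW, TightPuzzle.lockDiff]
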